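/- arXiv:2210.17273 — 3 statements merged into one kernel-verified Lean document; each statement's English description precedes it below -/
import Mathlib

section
/- Let M : ℝ → Matrix (Fin 2) (Fin 2) ℝ be continuous with M(t) symmetric for all t, and let J₁, J₂ : ℝ → ℝ² be twice continuously differentiable curves satisfying the Jacobi equation J''(t) = −M(t)J(t). Then the bracket [J₁,J₂](t) = ξ₁(t)η₂(t) − ξ₂(t)η₁(t) satisfies, for every t, d²/dt² [J₁,J₂](t) = −(trace M(t))·[J₁,J₂](t) + 2[J₁',J₂'](t). -/
/-- The bracket of two plane curves: the determinant of the 2×2 matrix with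
columns `J₁ t` and `J₂ t`. -/
noncomputable def bracket (J₁ J₂ : ℝ → Fin 2 → ℝ) (t : ℝ) : ℝ :=
  J₁ t 0 * J₂ t 1 - J₂ t 0 * J₁ t 1

/-!
The bracket is bilinear, so by the Leibniz rule its second derivative is
`[J₁'', J₂] + 2[J₁', J₂'] + [J₁, J₂'']`. Substituting the Jacobi equation, the outer terms
become `-([M J₁, J₂] + [J₁, M J₂])`, and for every 2×2 matrix `A` one has
`[A u, v] + [u, A v] = (trace A)[u, v]`, the infinitesimal form of `det (e^{sA}) = e^{s trace A}`.
-/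

section Bracket

variable {u v : ℝ → Fin 2 → ℝ}

theorem bracket_neg_left : bracket (-u) v = -bracket u v := by
  ext t; simp only [bracket, Pi.neg_apply]; ring

theorem bracket_neg_right : bracket u (-v) = -bracket u v := by
  ext t; simp only [bracket, Pi.neg_apply]; ring

theorem bracket_mulVec_add_bracket_mulVec (A : ℝ → Matrix (Fin 2) (Fin 2) ℝ) (t : ℝ) :
    bracket (fun s => (A s).mulVec (u s)) v t + bracket u (fun s => (A s).mulVec (v s)) t =
      (A t).trace * bracket u v t := by
  simp only [bracket, Matrix.mulVec, dotProduct, Fin.sum_univ_two, Matrix.trace_fin_two]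
  ring

theorem hasDerivAt_bracket {t : ℝ} (hu : DifferentiableAt ℝ u t) (hv : DifferentiableAt ℝ v t) :
    HasDerivAt (bracket u v) (bracket (deriv u) v t + bracket u (deriv v) t) t := by
  have hu' := hasDerivAt_pi.mp hu.hasDerivAt
  have hv' := hasDerivAt_pi.mp hv.hasDerivAt
  exact (((hu' 0).mul (hv' 1)).sub ((hv' 0).mul (hu' 1))).congr_deriv
    (by simp only [bracket]; ring)

theorem deriv_bracket (hu : Differentiable ℝ u) (hv : Differentiable ℝ v) :
    deriv (bracket u v) = bracket (deriv u) v + bracket u (deriv v) :=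
  funext fun t => (hasDerivAt_bracket (hu t) (hv t)).deriv

theorem deriv_deriv_bracket (hu : ContDiff ℝ 2 u) (hv : ContDiff ℝ 2 v) :
    deriv (deriv (bracket u v)) =
      bracket (deriv (deriv u)) v + 2 * bracket (deriv u) (deriv v)
        + bracket u (deriv (deriv v)) := by
  have hu₁ := hu.differentiable two_ne_zero
  have hv₁ := hv.differentiable two_ne_zero
  ext t
  rw [deriv_bracket hu₁ hv₁]
  convert ((hasDerivAt_bracket (hu.differentiable_deriv_two t) (hv₁ t)).add
    (hasDerivAt_bracket (hu₁ t) (hv.differentiable_deriv_two t))).deriv using 1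
  simp only [Pi.add_apply, Pi.mul_apply, Pi.ofNat_apply]
  ring

end Bracket

theorem bracket_second_deriv_general
    (M : ℝ → Matrix (Fin 2) (Fin 2) ℝ)
    (J₁ J₂ : ℝ → Fin 2 → ℝ)
    (hJ₁ : ContDiff ℝ 2 J₁) (hJ₂ : ContDiff ℝ 2 J₂)
    (hJ₁eq : ∀ t, deriv (deriv J₁) t = -((M t).mulVec (J₁ t)))
    (hJ₂eq : ∀ t, deriv (deriv J₂) t = -((M t).mulVec (J₂ t))) :
    ∀ t : ℝ, deriv (deriv (bracket J₁ J₂)) t =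
      -(Matrix.trace (M t)) * bracket J₁ J₂ t
        + 2 * bracket (deriv J₁) (deriv J₂) t := by
  intro t
  have hJ₁'' : deriv (deriv J₁) = -fun s => (M s).mulVec (J₁ s) := funext hJ₁eq
  have hJ₂'' : deriv (deriv J₂) = -fun s => (M s).mulVec (J₂ s) := funext hJ₂eq
  rw [deriv_deriv_bracket hJ₁ hJ₂, hJ₁'', hJ₂'', bracket_neg_left, bracket_neg_right]
  have hLiouville := bracket_mulVec_add_bracket_mulVec (u := J₁) (v := J₂) M t
  simp only [Pi.add_apply, Pi.neg_apply, Pi.mul_apply, Pi.ofNat_apply]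
  linarith

/-- If `J₁, J₂` are C² solutions of the Jacobi equation `J'' = -M(t)J` with `M`
continuous and symmetric, then
`d²/dt² [J₁,J₂] = -(trace M)·[J₁,J₂] + 2[J₁',J₂']`. -/
theorem bracket_second_deriv
    (M : ℝ → Matrix (Fin 2) (Fin 2) ℝ) (hM : Continuous M)
    (hMsymm : ∀ t, (M t).IsSymm)
    (J₁ J₂ : ℝ → Fin 2 → ℝ)
    (hJ₁ : ContDiff ℝ 2 J₁) (hJ₂ : ContDiff ℝ 2 J₂)
    (hJ₁eq : ∀ t, deriv (deriv J₁) t = -((M t).mulVec (J₁ t)))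
    (hJ₂eq : ∀ t, deriv (deriv J₂) t = -((M t).mulVec (J₂ t))) :
    ∀ t : ℝ, deriv (deriv (bracket J₁ J₂)) t =
      -(Matrix.trace (M t)) * bracket J₁ J₂ t
        + 2 * bracket (deriv J₁) (deriv J₂) t :=
  bracket_second_deriv_general M J₁ J₂ hJ₁ hJ₂ hJ₁eq hJ₂eq
end

section
/- Let M : ℝ → Matrix (Fin 2) (Fin 2) ℝ be continuous with M(t) symmetric for all t, and let J : ℝ → ℝ² be a twice continuously differentiable curve satisfying the Jacobi equation J''(t) = −M(t)J(t) that is not identically zero. If J(t₀) = 0 at some point t₀, then there exists δ > 0 such that J(t) ≠ 0 whenever 0 < |t − t₀| < δ; that is, the zeroes of a nontrivial Jacobi field are isolated. -/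
/-!
A nontrivial Jacobi field cannot vanish together with its derivative: `(J, J')` solves a linear
first-order ODE with continuous coefficients, so by uniqueness of solutions `J(t₀) = J'(t₀) = 0`
forces `J ≡ 0`. Hence `J'(t₀) ≠ 0` at a zero `t₀`, and a function with nonzero derivative at a
zero has no other zeros nearby.
-/

open Set Filter Topology

section LinearODE

variable {E : Type*} [NormedAddCommGroup E] [NormedSpace ℝ E]

theorem ODE_linear_solution_eq_zero {A : ℝ → E →L[ℝ] E} (hA : Continuous A) {x : ℝ → E}
    (hx : ∀ t, HasDerivAt x (A t (x t)) t) {t₀ : ℝ} (h₀ : x t₀ = 0) : x = 0 := by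
  ext t
  obtain ⟨a, b, ht, ht₀⟩ : ∃ a b, t ∈ Ioo a b ∧ t₀ ∈ Ioo a b :=
    ⟨min t t₀ - 1, max t t₀ + 1, by grind, by grind⟩
  obtain ⟨C, hC⟩ := (isCompact_Icc (a := a) (b := b)).exists_bound_of_continuousOn
    hA.continuousOn
  have hLip : ∀ s ∈ Ioo a b, LipschitzOnWith C.toNNReal (A s) univ := fun s hs =>
    ((A s).lipschitz.weaken <| by
      rw [← NNReal.coe_le_coe, coe_nnnorm]
      exact (hC s (Ioo_subset_Icc_self hs)).trans (Real.le_coe_toNNReal C)).lipschitzOnWith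
  exact ODE_solution_unique_of_mem_Ioo hLip ht₀ (fun s _ => ⟨hx s, trivial⟩)
    (fun s _ => ⟨by simp, trivial⟩) h₀ ht

/-- `(y, y') ↦ (y', -L y)`, so that `J'' = -M J` becomes a first-order system for `(J, J')`. -/
noncomputable def jacobiPhaseOperator (L : E →L[ℝ] E) : E × E →L[ℝ] E × E :=
  (ContinuousLinearMap.snd ℝ E E).prod (-(L.comp (ContinuousLinearMap.fst ℝ E E)))

theorem continuous_jacobiPhaseOperator {M : ℝ → E →L[ℝ] E} (hM : Continuous M) :
    Continuous fun t => jacobiPhaseOperator (M t) :=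
  (ContinuousLinearMap.prodₗᵢ ℝ).continuous.comp
    (continuous_const.prodMk (hM.clm_comp continuous_const).neg)

theorem jacobi_solution_eq_zero_of_initial_eq_zero {M : ℝ → E →L[ℝ] E} (hM : Continuous M)
    {J J' : ℝ → E} (hJ : ∀ t, HasDerivAt J (J' t) t) (hJ' : ∀ t, HasDerivAt J' (-M t (J t)) t)
    {t₀ : ℝ} (h₀ : J t₀ = 0) (h₀' : J' t₀ = 0) : J = 0 := by
  have hphase := ODE_linear_solution_eq_zero (continuous_jacobiPhaseOperator hM)
    (x := fun t => (J t, J' t)) (fun t => (hJ t).prodMk (hJ' t)) (Prod.ext h₀ h₀')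
  funext t
  exact congrArg Prod.fst (congrFun hphase t)

end LinearODE

theorem Continuous.toContinuousLinearMap_toLin' {n : Type*} [Fintype n] [DecidableEq n]
    {M : ℝ → Matrix n n ℝ} (hM : Continuous M) :
    Continuous fun t => LinearMap.toContinuousLinearMap (Matrix.toLin' (M t)) :=
  ((LinearMap.toContinuousLinearMap (𝕜 := ℝ) (E := n → ℝ) (F' := n → ℝ)).toLinearMap ∘ₗ
    (Matrix.toLin' (R := ℝ) (n := n)).toLinearMap).continuous_of_finiteDimensional.comp hM

theorem jacobi_field_zeros_isolated_general
    (M : ℝ → Matrix (Fin 2) (Fin 2) ℝ) (hM : Continuous M)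
    (J : ℝ → Fin 2 → ℝ) (hJ : ContDiff ℝ 2 J)
    (hJeq : ∀ t, deriv (deriv J) t = -((M t).mulVec (J t)))
    (hJne : ¬ ∀ t : ℝ, J t = 0)
    (t₀ : ℝ) (h0 : J t₀ = 0) :
    ∃ δ > 0, ∀ t : ℝ, 0 < |t - t₀| → |t - t₀| < δ → J t ≠ 0 := by
  have hJ₁ : ∀ t, HasDerivAt J (deriv J t) t := fun t =>
    (hJ.differentiable two_ne_zero t).hasDerivAt
  have hJ₂ : ∀ t, HasDerivAt (deriv J) (-(M t).mulVec (J t)) t := fun t =>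
    hJeq t ▸ (hJ.differentiable_deriv_two t).hasDerivAt
  have hd : deriv J t₀ ≠ 0 := fun hd => hJne fun t => congrFun
    (jacobi_solution_eq_zero_of_initial_eq_zero hM.toContinuousLinearMap_toLin' hJ₁
      (by simpa using hJ₂) h0 hd) t
  obtain ⟨δ, hδ, hne⟩ := Metric.eventually_nhds_iff.1
    (eventually_nhdsWithin_iff.1 ((hJ₁ t₀).eventually_ne hd (c := 0)))
  exact ⟨δ, hδ, fun t ht htδ => hne (by rwa [Real.dist_eq]) (by simpa [sub_eq_zero] using ht)⟩

/-- The zeroes of a nontrivial Jacobi field are isolated: if `J` is a C² solution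
of `J'' = -M(t)J` (with `M` continuous and symmetric) that is not identically zero
and `J t₀ = 0`, then `J` does not vanish on some punctured neighbourhood of `t₀`. -/
theorem jacobi_field_zeros_isolated
    (M : ℝ → Matrix (Fin 2) (Fin 2) ℝ) (hM : Continuous M)
    (hMsymm : ∀ t, (M t).IsSymm)
    (J : ℝ → Fin 2 → ℝ) (hJ : ContDiff ℝ 2 J)
    (hJeq : ∀ t, deriv (deriv J) t = -((M t).mulVec (J t)))
    (hJne : ¬ ∀ t : ℝ, J t = 0)
    (t₀ : ℝ) (h0 : J t₀ = 0) :
    ∃ δ > 0, ∀ t : ℝ, 0 < |t - t₀| → |t - t₀| < δ → J t ≠ 0 :=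
  jacobi_field_zeros_isolated_general M hM J hJ hJeq hJne t₀ h0
end

section
/- Let M : ℝ → Matrix (Fin 2) (Fin 2) ℝ be continuous with M(t) symmetric for all t, let J₁ : ℝ → ℝ² be a twice continuously differentiable solution of the Jacobi equation J''(t) = −M(t)J(t), and let J₂ : ℝ → ℝ² be continuous. Suppose J₁(t₀) = 0 and the vectors J₁'(t₀) and J₂(t₀) are linearly independent. Then the bracket [J₁,J₂] changes sign at t₀: there exists δ > 0 such that [J₁,J₂](s) · [J₁,J₂](t) < 0 whenever t₀ − δ < s < t₀ < t < t₀ + δ. (The area of the Jacobi ellipse has a simple zero and changes sign at a non-umbilic conjugate point.) -/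
/-!
Since `J₁ t₀ = 0`, the bracket vanishes at `t₀`, and the product rule survives the mere
continuity of `J₂`: the bracket is differentiable at `t₀` with derivative `[J₁'(t₀), J₂(t₀)]`,
which is nonzero by linear independence. A function with a simple zero changes sign there.
-/

open Filter Topology

theorem HasDerivAt.mul_continuousAt_of_eq_zero {𝕜 : Type*} [NontriviallyNormedField 𝕜]
    {f g : 𝕜 → 𝕜} {f' a : 𝕜} (hf : HasDerivAt f f' a) (hfa : f a = 0)
    (hg : ContinuousAt g a) : HasDerivAt (fun x => f x * g x) (f' * g a) a := by
  rw [hasDerivAt_iff_tendsto_slope] at hf ⊢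
  have hslope : slope (fun x => f x * g x) a = fun x => slope f a x * g x := by
    funext x
    simp only [slope_def_field, hfa, zero_mul, sub_zero]
    ring
  rw [hslope]
  exact hf.mul (hg.tendsto.mono_left nhdsWithin_le_nhds)

theorem exists_mul_neg_of_hasDerivAt_of_eq_zero {f : ℝ → ℝ} {f' a : ℝ} (hf : HasDerivAt f f' a)
    (hf' : f' ≠ 0) (hfa : f a = 0) :
    ∃ δ > 0, ∀ s t, a - δ < s → s < a → a < t → t < a + δ → f s * f t < 0 := by
  have hslope : ∀ᶠ x in 𝓝[≠] a, 0 < slope f a x * f' :=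
    ((hasDerivAt_iff_tendsto_slope.mp hf).mul_const f').eventually
      (eventually_gt_nhds (mul_self_pos.mpr hf'))
  obtain ⟨δ, hδ, hball⟩ := Metric.eventually_nhds_iff.mp (eventually_nhdsWithin_iff.mp hslope)
  refine ⟨δ, hδ, fun s t hs hsa hat ht => ?_⟩
  have hs' : 0 < slope f a s * f' :=
    hball (by rw [Real.dist_eq, abs_lt]; constructor <;> linarith) hsa.ne
  have ht' : 0 < slope f a t * f' :=
    hball (by rw [Real.dist_eq, abs_lt]; constructor <;> linarith) hat.ne'
  have hslopes : 0 < slope f a s * slope f a t := by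
    nlinarith [mul_pos hs' ht', mul_self_pos.mpr hf']
  have hf_eq : ∀ x, f x = (x - a) * slope f a x := fun x => by
    rw [← smul_eq_mul, sub_smul_slope, hfa, vsub_eq_sub, sub_zero]
  calc f s * f t = ((s - a) * (t - a)) * (slope f a s * slope f a t) := by
        rw [hf_eq s, hf_eq t]; ring
    _ < 0 := mul_neg_of_neg_of_pos (mul_neg_of_neg_of_pos (by linarith) (by linarith)) hslopes

theorem LinearIndependent.fin_two_det_ne_zero {K : Type*} [Field K] {u v : Fin 2 → K}
    (h : LinearIndependent K ![u, v]) : u 0 * v 1 - v 0 * u 1 ≠ 0 := by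
  have hrows : LinearIndependent K (Matrix.of ![u, v]).row := h
  rw [Matrix.linearIndependent_rows_iff_isUnit, Matrix.isUnit_iff_isUnit_det,
    Matrix.det_fin_two, isUnit_iff_ne_zero] at hrows
  simpa [mul_comm] using hrows

theorem hasDerivAt_bracket_of_eq_zero {J₁ J₂ : ℝ → Fin 2 → ℝ} {u : Fin 2 → ℝ} {t₀ : ℝ}
    (hJ₁ : HasDerivAt J₁ u t₀) (hJ₁0 : J₁ t₀ = 0) (hJ₂ : ContinuousAt J₂ t₀) :
    HasDerivAt (bracket J₁ J₂) (u 0 * J₂ t₀ 1 - J₂ t₀ 0 * u 1) t₀ := by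
  have hJ₁i (i : Fin 2) : HasDerivAt (fun t => J₁ t i) (u i) t₀ := hasDerivAt_pi.mp hJ₁ i
  have hJ₁0i (i : Fin 2) : J₁ t₀ i = 0 := by rw [hJ₁0, Pi.zero_apply]
  have hJ₂i (i : Fin 2) : ContinuousAt (fun t => J₂ t i) t₀ :=
    (continuous_apply i).continuousAt.comp hJ₂
  have h := ((hJ₁i 0).mul_continuousAt_of_eq_zero (hJ₁0i 0) (hJ₂i 1)).sub
    ((hJ₁i 1).mul_continuousAt_of_eq_zero (hJ₁0i 1) (hJ₂i 0))
  have hbracket : bracket J₁ J₂ = fun t => J₁ t 0 * J₂ t 1 - J₁ t 1 * J₂ t 0 := by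
    funext t
    simp only [bracket]
    ring
  rw [hbracket]
  exact h.congr_deriv (by ring)

theorem bracket_changes_sign_at_conjugate_point_general
    (J₁ J₂ : ℝ → Fin 2 → ℝ)
    (hJ₁ : ContDiff ℝ 2 J₁)
    (hJ₂ : Continuous J₂)
    (t₀ : ℝ) (hJ₁0 : J₁ t₀ = 0)
    (hind : LinearIndependent ℝ ![deriv J₁ t₀, J₂ t₀]) :
    ∃ δ > 0, ∀ s t : ℝ, t₀ - δ < s → s < t₀ → t₀ < t → t < t₀ + δ →
      bracket J₁ J₂ s * bracket J₁ J₂ t < 0 := by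
  have hderiv : HasDerivAt J₁ (deriv J₁ t₀) t₀ :=
    (hJ₁.differentiable (by norm_num) t₀).hasDerivAt
  refine exists_mul_neg_of_hasDerivAt_of_eq_zero
    (hasDerivAt_bracket_of_eq_zero hderiv hJ₁0 hJ₂.continuousAt) hind.fin_two_det_ne_zero ?_
  simp [bracket, hJ₁0]

/-- The area of the Jacobi ellipse changes sign at a non-umbilic conjugate point:
if `J₁` is a C² solution of the Jacobi equation `J'' = -M(t)J` (with `M`
continuous and symmetric), `J₂` is continuous, `J₁ t₀ = 0`, and `J₁'(t₀)` and
`J₂ t₀` are linearly independent, then the bracket `[J₁,J₂]` takes opposite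
signs just before and just after `t₀`. -/
theorem bracket_changes_sign_at_conjugate_point
    (M : ℝ → Matrix (Fin 2) (Fin 2) ℝ) (hM : Continuous M)
    (hMsymm : ∀ t, (M t).IsSymm)
    (J₁ J₂ : ℝ → Fin 2 → ℝ)
    (hJ₁ : ContDiff ℝ 2 J₁)
    (hJ₁eq : ∀ t, deriv (deriv J₁) t = -((M t).mulVec (J₁ t)))
    (hJ₂ : Continuous J₂)
    (t₀ : ℝ) (hJ₁0 : J₁ t₀ = 0)
    (hind : LinearIndependent ℝ ![deriv J₁ t₀, J₂ t₀]) :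
    ∃ δ > 0, ∀ s t : ℝ, t₀ - δ < s → s < t₀ → t₀ < t → t < t₀ + δ →
      bracket J₁ J₂ s * bracket J₁ J₂ t < 0 :=
  bracket_changes_sign_at_conjugate_point_general J₁ J₂ hJ₁ hJ₂ t₀ hJ₁0 hind
end
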